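/- arXiv:0810.2717 — 5 statements merged into one kernel-verified Lean document; each statement's English description precedes it below -/
import Mathlib

section
/- For a connected weighted graph G (all edge weights positive), every entry of Q = (I + L)^{-1} is strictly positive, where L is the Laplacian matrix of G. -/
/-!
Minimum principle. Let `M` have nonpositive off-diagonal entries and positive row sums, as
`1 + L` does. At a minimum `x a` of `x`, `(M x) a ≤ x a * ∑ b, M a b`, so
`M x ≥ 0` forces `x ≥ 0`; applied to `± x` this makes `M` injective, hence invertible, and applied
to a column `x` of `M⁻¹` (where `M x` is a standard basis vector `e j`) it gives `M⁻¹ ≥ 0`. If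
`x a = 0`, then `0 ≤ (M x) a = ∑_{b ≠ a} M a b * x b ≤ 0` kills `x b` at every neighbour `b` of `a`;
by connectedness `x` would vanish at `j` too, contradicting `(M x) j = 1`.
-/

open Matrix Finset

namespace Matrix

variable {ι R : Type*} [CommRing R] [LinearOrder R] [IsStrictOrderedRing R]
  {M : Matrix ι ι R} {x : ι → R}

theorem mulVec_apply_le_mul_sum_of_forall_le [Fintype ι] (hoff : ∀ a b, a ≠ b → M a b ≤ 0)
    {a : ι} (hmin : ∀ b, x a ≤ x b) : (M *ᵥ x) a ≤ x a * ∑ b, M a b := by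
  rw [mul_comm, sum_mul]
  refine sum_le_sum fun b _ => ?_
  rcases eq_or_ne a b with rfl | hab
  · rfl
  · exact mul_le_mul_of_nonpos_left (hmin b) (hoff a b hab)

theorem nonneg_of_mulVec_nonneg [Fintype ι] (hoff : ∀ a b, a ≠ b → M a b ≤ 0)
    (hrow : ∀ a, 0 < ∑ b, M a b) (hMx : 0 ≤ M *ᵥ x) : 0 ≤ x := by
  intro a
  obtain ⟨m, -, hm⟩ := exists_min_image univ x ⟨a, mem_univ a⟩
  have hxm : 0 ≤ x m * ∑ b, M m b :=
    (hMx m).trans (mulVec_apply_le_mul_sum_of_forall_le hoff fun b => hm b (mem_univ b))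
  exact (nonneg_of_mul_nonneg_left hxm (hrow m)).trans (hm a (mem_univ a))

theorem det_ne_zero_of_offDiag_nonpos_of_sum_pos [Fintype ι] [DecidableEq ι]
    (hoff : ∀ a b, a ≠ b → M a b ≤ 0) (hrow : ∀ a, 0 < ∑ b, M a b) : M.det ≠ 0 := by
  intro hdet
  obtain ⟨v, hv, hMv⟩ := exists_mulVec_eq_zero_iff.mpr hdet
  have hneg : 0 ≤ -v := nonneg_of_mulVec_nonneg hoff hrow (by rw [mulVec_neg, hMv, neg_zero])
  exact hv (le_antisymm (neg_nonneg.mp hneg) (nonneg_of_mulVec_nonneg hoff hrow hMv.ge))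

theorem mul_apply_nonpos_of_eq_zero (hoff : ∀ a b, a ≠ b → M a b ≤ 0) (hx : 0 ≤ x) {a : ι}
    (ha : x a = 0) (b : ι) : M a b * x b ≤ 0 := by
  rcases eq_or_ne a b with rfl | hab
  · rw [ha, mul_zero]
  · exact mul_nonpos_of_nonpos_of_nonneg (hoff a b hab) (hx b)

theorem mulVec_apply_nonpos_of_eq_zero [Fintype ι] (hoff : ∀ a b, a ≠ b → M a b ≤ 0)
    (hx : 0 ≤ x) {a : ι} (ha : x a = 0) : (M *ᵥ x) a ≤ 0 :=
  sum_nonpos fun b _ => mul_apply_nonpos_of_eq_zero hoff hx ha b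

theorem eq_zero_of_adj_of_eq_zero [Fintype ι] {G : SimpleGraph ι}
    (hoff : ∀ a b, a ≠ b → M a b ≤ 0) (hadj : ∀ a b, G.Adj a b → M a b < 0) (hx : 0 ≤ x)
    (hMx : 0 ≤ M *ᵥ x) {a b : ι} (hab : G.Adj a b) (ha : x a = 0) : x b = 0 := by
  have hsum : (M *ᵥ x) a = 0 :=
    le_antisymm (mulVec_apply_nonpos_of_eq_zero hoff hx ha) (hMx a)
  have hterm : M a b * x b = 0 :=
    (sum_eq_zero_iff_of_nonpos fun c _ => mul_apply_nonpos_of_eq_zero hoff hx ha c).mp hsum b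
      (mem_univ b)
  exact (mul_eq_zero.mp hterm).resolve_left (hadj a b hab).ne

theorem eq_zero_of_reachable_of_eq_zero [Fintype ι] {G : SimpleGraph ι}
    (hoff : ∀ a b, a ≠ b → M a b ≤ 0) (hadj : ∀ a b, G.Adj a b → M a b < 0) (hx : 0 ≤ x)
    (hMx : 0 ≤ M *ᵥ x) {a b : ι} (hab : G.Reachable a b) (ha : x a = 0) : x b = 0 := by
  rw [SimpleGraph.reachable_iff_reflTransGen] at hab
  induction hab with
  | refl => exact ha
  | tail _ hcd ih => exact eq_zero_of_adj_of_eq_zero hoff hadj hx hMx hcd ih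

theorem inv_apply_pos_of_connected {K : Type*} [Field K] [LinearOrder K] [IsStrictOrderedRing K]
    [Fintype ι] [DecidableEq ι] {M : Matrix ι ι K} {G : SimpleGraph ι} (hconn : G.Connected)
    (hoff : ∀ a b, a ≠ b → M a b ≤ 0) (hrow : ∀ a, 0 < ∑ b, M a b)
    (hadj : ∀ a b, G.Adj a b → M a b < 0) (i j : ι) : 0 < M⁻¹ i j := by
  have hdet : IsUnit M.det := (det_ne_zero_of_offDiag_nonpos_of_sum_pos hoff hrow).isUnit
  have hcol : M *ᵥ M⁻¹.col j = Pi.single j 1 := by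
    rw [← mulVec_single_one, mulVec_mulVec, mul_nonsing_inv M hdet, one_mulVec]
  have hMx : 0 ≤ M *ᵥ M⁻¹.col j := hcol ▸ Pi.single_nonneg.mpr zero_le_one
  have hx : 0 ≤ M⁻¹.col j := nonneg_of_mulVec_nonneg hoff hrow hMx
  refine (hx i).lt_of_ne' fun hi => ?_
  have hj : M⁻¹.col j j = 0 :=
    eq_zero_of_reachable_of_eq_zero hoff hadj hx hMx (hconn.preconnected i j) hi
  have hMj := mulVec_apply_nonpos_of_eq_zero hoff hx hj
  rw [hcol, Pi.single_eq_same] at hMj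
  exact absurd hMj one_pos.not_ge

end Matrix

theorem stmt_2_general {n : ℕ} (G : SimpleGraph (Fin n)) (hconn : G.Connected)
    (W : Matrix (Fin n) (Fin n) ℝ)
    (hadj : ∀ i j, G.Adj i j → 0 < W i j)
    (hnadj : ∀ i j, ¬ G.Adj i j → W i j = 0)
    (L : Matrix (Fin n) (Fin n) ℝ)
    (hL : ∀ i j, L i j = if i = j then ∑ k, W i k else - W i j) :
    ∀ i j, 0 < (1 + L)⁻¹ i j := by
  have hW : ∀ a b, 0 ≤ W a b := by
    intro a b
    by_cases h : G.Adj a b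
    · exact (hadj a b h).le
    · exact (hnadj a b h).ge
  have hrowL : ∀ a, ∑ b, L a b = W a a := by
    intro a
    have hoffL : ∑ b ∈ {a}ᶜ, L a b = -∑ b ∈ {a}ᶜ, W a b := by
      rw [← sum_neg_distrib]
      exact sum_congr rfl fun b hb => by rw [hL, if_neg (by simpa [eq_comm] using hb)]
    rw [Fintype.sum_eq_add_sum_compl a, hoffL, hL, if_pos rfl, Fintype.sum_eq_add_sum_compl a]
    ring
  refine inv_apply_pos_of_connected hconn (fun a b hab => ?_) (fun a => ?_)
    (fun a b hab => ?_)
  · simpa [hL, hab] using hW a b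
  · simp only [Matrix.add_apply, sum_add_distrib, hrowL, one_apply, sum_ite_eq, mem_univ, if_true]
    linarith [hW a a]
  · simpa [hL, hab.ne] using hadj a b hab

/-- For a connected weighted graph `G` (all edge weights positive), every entry
of `Q = (I + L)⁻¹` is strictly positive, where `L` is the Laplacian of `G`. -/
theorem stmt_2 {n : ℕ} (G : SimpleGraph (Fin n)) (hconn : G.Connected)
    (W : Matrix (Fin n) (Fin n) ℝ) (hWsym : ∀ i j, W i j = W j i)
    (hadj : ∀ i j, G.Adj i j → 0 < W i j)
    (hnadj : ∀ i j, ¬ G.Adj i j → W i j = 0)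
    (L : Matrix (Fin n) (Fin n) ℝ)
    (hL : ∀ i j, L i j = if i = j then ∑ k, W i k else - W i j) :
    ∀ i j, 0 < (1 + L)⁻¹ i j :=
  stmt_2_general G hconn W hadj hnadj L hL
end

section
/- The matrix Q = (I + L)^{-1} of a weighted graph is symmetric and doubly stochastic: Q·1 = 1 and each row sums to 1, and entries of Q lie in [0,1] for connected G with positive weights. -/
open Matrix Finset

/-!
Write `L *ᵥ x` as `i ↦ ∑ⱼ L i j (x j - x i)`, which is possible because the rows of `L` sum to
zero. At a coordinate where `x` is minimal every term is `≤ 0`, since the off-diagonal entries of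
`L` are `≤ 0`; hence `min x ≥ min ((1 + L) *ᵥ x)`, and symmetrically for the maximum. This
discrete minimum principle makes `1 + L` injective, hence invertible, and applied to
`(1 + L) x = Pi.single j 1` it puts the `j`-th column of `Q = (1 + L)⁻¹` in `[0, 1]`.
-/

namespace Matrix

variable {ι : Type*} [Fintype ι] {L : Matrix ι ι ℝ}

theorem mulVec_apply_eq_sum_mul_sub (hrow : ∀ i, ∑ j, L i j = 0) (x : ι → ℝ) (i : ι) :
    (L *ᵥ x) i = ∑ j, L i j * (x j - x i) := by
  simp only [mulVec, dotProduct, mul_sub, sum_sub_distrib, ← sum_mul, hrow i, zero_mul, sub_zero]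

variable [DecidableEq ι]

theorem le_apply_of_le_one_add_mulVec (hoff : ∀ i j, i ≠ j → L i j ≤ 0)
    (hrow : ∀ i, ∑ j, L i j = 0) {x : ι → ℝ} {c : ℝ} (h : ∀ k, c ≤ ((1 + L) *ᵥ x) k) (i : ι) :
    c ≤ x i := by
  obtain ⟨m, -, hm⟩ := exists_min_image univ x ⟨i, mem_univ i⟩
  have hLx : (L *ᵥ x) m ≤ 0 := by
    rw [mulVec_apply_eq_sum_mul_sub hrow]
    refine sum_nonpos fun j _ => ?_
    rcases eq_or_ne m j with rfl | hmj
    · simp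
    · exact mul_nonpos_of_nonpos_of_nonneg (hoff m j hmj) (sub_nonneg.2 (hm j (mem_univ j)))
  calc c ≤ ((1 + L) *ᵥ x) m := h m
    _ = x m + (L *ᵥ x) m := by rw [add_mulVec, one_mulVec, Pi.add_apply]
    _ ≤ x i := by linarith [hm i (mem_univ i)]

theorem apply_le_of_one_add_mulVec_le (hoff : ∀ i j, i ≠ j → L i j ≤ 0)
    (hrow : ∀ i, ∑ j, L i j = 0) {x : ι → ℝ} {c : ℝ} (h : ∀ k, ((1 + L) *ᵥ x) k ≤ c) (i : ι) :
    x i ≤ c := by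
  have := le_apply_of_le_one_add_mulVec hoff hrow (x := -x) (c := -c)
    (fun k => by rw [mulVec_neg, Pi.neg_apply, neg_le_neg_iff]; exact h k) i
  simpa using this

theorem isUnit_one_add_of_offDiag_nonpos (hoff : ∀ i j, i ≠ j → L i j ≤ 0)
    (hrow : ∀ i, ∑ j, L i j = 0) : IsUnit (1 + L) := by
  refine mulVec_injective_iff_isUnit.1 fun x y hxy => funext fun i => ?_
  have hzero : ∀ k, ((1 + L) *ᵥ (x - y)) k = 0 := by simp [mulVec_sub, hxy]
  have h₁ := le_apply_of_le_one_add_mulVec hoff hrow (fun k => (hzero k).ge) i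
  have h₂ := apply_le_of_one_add_mulVec_le hoff hrow (fun k => (hzero k).le) i
  simp only [Pi.sub_apply] at h₁ h₂
  linarith

theorem inv_one_add_apply_mem_Icc (hoff : ∀ i j, i ≠ j → L i j ≤ 0)
    (hrow : ∀ i, ∑ j, L i j = 0) (i j : ι) : (1 + L)⁻¹ i j ∈ Set.Icc (0 : ℝ) 1 := by
  have hunit := (isUnit_iff_isUnit_det _).1 (isUnit_one_add_of_offDiag_nonpos hoff hrow)
  have hsolve : (1 + L) *ᵥ ((1 + L)⁻¹ *ᵥ Pi.single j 1) = Pi.single j 1 := by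
    rw [mulVec_mulVec, mul_nonsing_inv _ hunit, one_mulVec]
  have hcol : (1 + L)⁻¹ i j = ((1 + L)⁻¹ *ᵥ Pi.single j 1) i := by
    rw [mulVec_single_one, col_apply]
  rw [hcol]
  refine ⟨le_apply_of_le_one_add_mulVec hoff hrow (fun k => ?_) i,
    apply_le_of_one_add_mulVec_le hoff hrow (fun k => ?_) i⟩ <;>
  · rw [hsolve]
    by_cases hk : k = j <;> simp [hk]

theorem inv_one_add_mulVec_one (hoff : ∀ i j, i ≠ j → L i j ≤ 0)
    (hrow : ∀ i, ∑ j, L i j = 0) : (1 + L)⁻¹ *ᵥ 1 = 1 := by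
  have hunit := (isUnit_iff_isUnit_det _).1 (isUnit_one_add_of_offDiag_nonpos hoff hrow)
  have hfix : (1 + L) *ᵥ 1 = 1 := by
    ext i
    simp [add_mulVec, mulVec_apply_eq_sum_mul_sub hrow]
  conv_lhs => rw [← hfix, mulVec_mulVec, nonsing_inv_mul _ hunit, one_mulVec]

theorem sum_apply_eq_zero_of_eq_laplacian {W : Matrix ι ι ℝ} (hdiag : ∀ i, W i i = 0)
    (hL : ∀ i j, L i j = if i = j then ∑ k, W i k else -W i j) (i : ι) : ∑ j, L i j = 0 := by
  have hsplit : ∀ j, L i j = (if i = j then ∑ k, W i k else 0) - W i j := by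
    intro j
    rcases eq_or_ne i j with rfl | hij
    · simp [hL, hdiag]
    · simp [hL, hij]
  simp only [hsplit, sum_sub_distrib, sum_ite_eq, mem_univ, if_true, sub_self]

end Matrix

theorem stmt_3_general {n : ℕ} (G : SimpleGraph (Fin n))
    (W : Matrix (Fin n) (Fin n) ℝ) (hWsym : ∀ i j, W i j = W j i)
    (hadj : ∀ i j, G.Adj i j → 0 < W i j)
    (hnadj : ∀ i j, ¬ G.Adj i j → W i j = 0)
    (L : Matrix (Fin n) (Fin n) ℝ)
    (hL : ∀ i j, L i j = if i = j then ∑ k, W i k else - W i j)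
    (Q : Matrix (Fin n) (Fin n) ℝ) (hQ : Q = (1 + L)⁻¹) :
    Qᵀ = Q ∧ Q *ᵥ (fun _ => (1 : ℝ)) = (fun _ => (1 : ℝ)) ∧
      (∀ i, ∑ j, Q i j = 1) ∧ ∀ i j, Q i j ∈ Set.Icc (0 : ℝ) 1 := by
  have hW : ∀ i j, 0 ≤ W i j := fun i j => by
    by_cases h : G.Adj i j
    exacts [(hadj i j h).le, (hnadj i j h).ge]
  have hoff : ∀ i j, i ≠ j → L i j ≤ 0 := fun i j hij => by
    rw [hL, if_neg hij]
    exact neg_nonpos.2 (hW i j)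
  have hrow : ∀ i, ∑ j, L i j = 0 :=
    sum_apply_eq_zero_of_eq_laplacian (fun i => hnadj i i (G.loopless.irrefl i)) hL
  have hLsymm : Lᵀ = L := by
    ext i j
    rw [transpose_apply, hL, hL]
    rcases eq_or_ne j i with rfl | hji
    · rfl
    · rw [if_neg hji, if_neg hji.symm, hWsym]
  have hQone : Q *ᵥ 1 = 1 := hQ ▸ inv_one_add_mulVec_one hoff hrow
  refine ⟨?_, hQone, fun i => ?_, hQ ▸ inv_one_add_apply_mem_Icc hoff hrow⟩
  · rw [hQ, transpose_nonsing_inv, transpose_add, transpose_one, hLsymm]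
  · simpa [mulVec, dotProduct] using congrFun hQone i

/-- The matrix `Q = (I + L)⁻¹` of a weighted graph is symmetric and doubly
stochastic: `Q·1 = 1` and each row sums to `1`, and the entries of `Q` lie in
`[0,1]` for connected `G` with positive weights. -/
theorem stmt_3 {n : ℕ} (G : SimpleGraph (Fin n)) (hconn : G.Connected)
    (W : Matrix (Fin n) (Fin n) ℝ) (hWsym : ∀ i j, W i j = W j i)
    (hadj : ∀ i j, G.Adj i j → 0 < W i j)
    (hnadj : ∀ i j, ¬ G.Adj i j → W i j = 0)
    (L : Matrix (Fin n) (Fin n) ℝ)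
    (hL : ∀ i j, L i j = if i = j then ∑ k, W i k else - W i j)
    (Q : Matrix (Fin n) (Fin n) ℝ) (hQ : Q = (1 + L)⁻¹) :
    Qᵀ = Q ∧ Q *ᵥ (fun _ => (1 : ℝ)) = (fun _ => (1 : ℝ)) ∧
      (∀ i, ∑ j, Q i j = 1) ∧ ∀ i j, Q i j ∈ Set.Icc (0 : ℝ) 1 :=
  stmt_3_general G W hWsym hadj hnadj L hL Q hQ
end

section
/- For a connected weighted graph with Laplacian L, for any α ≠ 0, the Moore–Penrose inverse satisfies L⁺ = (L + αJ̄)^{-1} − α^{-1}J̄, where J̄ is the matrix with all entries 1/n. -/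
/-!
Let `J̄` be the orthogonal projection onto `ker L = span 1`. The Penrose equations give
`L⁺L + J̄ = 1`: the defect `1 - L⁺L - J̄` is annihilated on the left by `L`, so its columns are
constant and `J̄` fixes it, while `J̄` also annihilates it because `J̄L⁺L = J̄L(L⁺)ᵀ = 0`.
Together with `L⁺J̄ = 0`, `J̄L = 0` and `J̄² = J̄` this expands `(L⁺ + α⁻¹J̄)(L + αJ̄)` to `1`.
-/

open Matrix

theorem IsSelfAdjoint.mul_eq_zero_of_mul_eq_zero {R : Type*} [Ring R] [StarRing R] {a b : R}
    (ha : IsSelfAdjoint a) (hb : IsSelfAdjoint b) (h : a * b = 0) : b * a = 0 := by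
  simpa [ha.star_eq, hb.star_eq] using congrArg star h

structure IsMoorePenroseInverse {R : Type*} [Mul R] [Star R] (a b : R) : Prop where
  mul_pinv_mul : a * b * a = a
  pinv_mul_pinv : b * a * b = b
  isSelfAdjoint_mul_pinv : IsSelfAdjoint (a * b)
  isSelfAdjoint_pinv_mul : IsSelfAdjoint (b * a)

namespace IsMoorePenroseInverse

variable {R : Type*} [Ring R] [StarRing R] {l p j : R}

theorem pinv_mul_add_eq_one (hmp : IsMoorePenroseInverse l p) (hl : IsSelfAdjoint l)
    (hlj : l * j = 0) (hjl : j * l = 0) (hjj : j * j = j)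
    (hker : ∀ m, l * m = 0 → j * m = m) : p * l + j = 1 := by
  have hjpl : j * (p * l) = 0 := by
    rw [← hmp.isSelfAdjoint_pinv_mul.star_eq, star_mul, hl.star_eq, ← mul_assoc, hjl, zero_mul]
  have hdefect := hker (1 - p * l - j) (by
    rw [mul_sub, mul_sub, mul_one, ← mul_assoc, hmp.mul_pinv_mul, hlj, sub_self, sub_zero])
  rw [mul_sub, mul_sub, mul_one, hjpl, hjj, sub_zero, sub_self, eq_comm, sub_eq_zero] at hdefect
  rw [← hdefect]
  abel

theorem pinv_mul_eq_zero (hmp : IsMoorePenroseInverse l p) (hl : IsSelfAdjoint l) (hlj : l * j = 0) :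
    p * j = 0 := by
  rw [← hmp.pinv_mul_pinv, mul_assoc p, ← hmp.isSelfAdjoint_mul_pinv.star_eq, star_mul,
    hl.star_eq, mul_assoc, mul_assoc, hlj, mul_zero, mul_zero]

end IsMoorePenroseInverse

theorem add_inv_smul_mul_add_smul {K R : Type*} [Field K] [Ring R] [Algebra K R] {l p j : R}
    {α : K} (hα : α ≠ 0) (hpl : p * l + j = 1) (hpj : p * j = 0) (hjl : j * l = 0)
    (hjj : j * j = j) : (p + α⁻¹ • j) * (l + α • j) = 1 := by
  rw [add_mul, mul_add, mul_add, mul_smul_comm, hpj, smul_zero, smul_mul_assoc, hjl, smul_zero,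
    smul_mul_smul_comm, inv_mul_cancel₀ hα, one_smul, hjj, add_zero, zero_add, hpl]

namespace Matrix

def averaging (ι K : Type*) [Fintype ι] [Field K] : Matrix ι ι K :=
  of fun _ _ => (Fintype.card ι : K)⁻¹

variable {ι K : Type*} [Fintype ι] [Field K]

theorem transpose_averaging : (averaging ι K)ᵀ = averaging ι K := rfl

theorem isSelfAdjoint_averaging [StarRing K] [TrivialStar K] : IsSelfAdjoint (averaging ι K) :=
  (conjTranspose_eq_transpose_of_trivial _).trans transpose_averaging

theorem mul_averaging_eq_zero {L : Matrix ι ι K} (h : L *ᵥ (fun _ => 1) = 0) :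
    L * averaging ι K = 0 := by
  ext i j
  simpa [averaging, mul_apply, mulVec, dotProduct, ← Finset.sum_mul] using
    Or.inl (congrFun h i)

variable [CharZero K]

theorem averaging_mul_of_col_const {M : Matrix ι ι K} (hM : ∀ i i' j, M i j = M i' j) :
    averaging ι K * M = M := by
  ext i j
  have : (Fintype.card ι : K) ≠ 0 := Nat.cast_ne_zero.mpr (Fintype.card_pos_iff.mpr ⟨i⟩).ne'
  simp [averaging, mul_apply, hM _ i j, Finset.card_univ, this]

theorem averaging_mul_self : averaging ι K * averaging ι K = averaging ι K :=
  averaging_mul_of_col_const fun _ _ _ => rfl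

end Matrix

theorem stmt_9_general {n : ℕ} (L : Matrix (Fin n) (Fin n) ℝ)
    (hpsd : L.PosSemidef)
    (h1 : L *ᵥ (fun _ => (1 : ℝ)) = 0)
    (hker : ∀ v : Fin n → ℝ, L *ᵥ v = 0 → ∃ c : ℝ, v = fun _ => c)
    (P : Matrix (Fin n) (Fin n) ℝ)
    (hP1 : L * P * L = L) (hP2 : P * L * P = P)
    (hP3 : (L * P).IsHermitian) (hP4 : (P * L).IsHermitian)
    (J : Matrix (Fin n) (Fin n) ℝ) (hJ : J = Matrix.of fun _ _ => (n : ℝ)⁻¹)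
    (α : ℝ) (hα : α ≠ 0) :
    P = (L + α • J)⁻¹ - α⁻¹ • J := by
  obtain rfl : J = averaging (Fin n) ℝ := by simp [hJ, averaging]
  have hmp : IsMoorePenroseInverse L P := ⟨hP1, hP2, hP3, hP4⟩
  have hL : IsSelfAdjoint L := hpsd.isHermitian
  have hLJ := mul_averaging_eq_zero h1
  have hJL := hL.mul_eq_zero_of_mul_eq_zero isSelfAdjoint_averaging hLJ
  have hkerJ (M : Matrix (Fin n) (Fin n) ℝ) (hM : L * M = 0) :
      averaging (Fin n) ℝ * M = M := by
    refine averaging_mul_of_col_const fun i i' j => ?_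
    obtain ⟨c, hc⟩ := hker (Mᵀ j) (by
      ext i; simpa [mulVec, dotProduct, mul_apply] using congrFun (congrFun hM i) j)
    exact (congrFun hc i).trans (congrFun hc i').symm
  have hPL := hmp.pinv_mul_add_eq_one hL hLJ hJL averaging_mul_self hkerJ
  have hPJ := hmp.pinv_mul_eq_zero hL hLJ
  rw [inv_eq_left_inv (add_inv_smul_mul_add_smul hα hPL hPJ hJL averaging_mul_self)]
  abel

/-- For a connected weighted graph with Laplacian `L`, for any `α ≠ 0`, the
Moore–Penrose inverse satisfies `L⁺ = (L + αJ̄)⁻¹ − α⁻¹J̄`, where `J̄` is the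
matrix with all entries `1/n`. -/
theorem stmt_9 {n : ℕ} (hn : 0 < n) (L : Matrix (Fin n) (Fin n) ℝ)
    (hpsd : L.PosSemidef)
    (h1 : L *ᵥ (fun _ => (1 : ℝ)) = 0)
    (hker : ∀ v : Fin n → ℝ, L *ᵥ v = 0 → ∃ c : ℝ, v = fun _ => c)
    (P : Matrix (Fin n) (Fin n) ℝ)
    (hP1 : L * P * L = L) (hP2 : P * L * P = P)
    (hP3 : (L * P).IsHermitian) (hP4 : (P * L).IsHermitian)
    (J : Matrix (Fin n) (Fin n) ℝ) (hJ : J = Matrix.of fun _ _ => (n : ℝ)⁻¹)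
    (α : ℝ) (hα : α ≠ 0) :
    P = (L + α • J)⁻¹ - α⁻¹ • J :=
  stmt_9_general L hpsd h1 hker P hP1 hP2 hP3 hP4 J hJ α hα
end

section
/- Let Q_α = (I + αL)^{-1} for the Laplacian L of a connected weighted graph. Then for each pair i ≠ j, as α → 0⁺, (I + αL)^{-1}_{ij} = f_ij^{(m)} α^m + o(α^m), where m is the smallest number of edges of a spanning rooted forest in which i is in the tree rooted at j; equivalently, log_α (Q_α)_{ij} → m as α → 0⁺. In particular, for unit edge weights m equals the shortest-path distance between i and j. -/
open Matrix Filter Finset Topology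

/-! The forest polynomial `f_ij` vanishes to order exactly `m` at `0`, so
`(Q_α)_ij = α ^ m * g α` with `g α = (f_ij(α) / α ^ m) / f(α) → f_ij^{(m)} / 1 ≠ 0`.
Taking logarithms, `log (Q_α)_ij / log α = m + log (g α) / log α`, and the last term
tends to `0` because `log (g α)` stays bounded while `log α → -∞`. -/

theorem sum_range_mul_pow_eq_pow_mul {R : Type*} [CommSemiring R] (c : ℕ → R) {m N : ℕ}
    (hmN : m ≤ N) (hc : ∀ k < m, c k = 0) (x : R) :
    ∑ k ∈ range (N + 1), c k * x ^ k = x ^ m * ∑ k ∈ range (N - m + 1), c (m + k) * x ^ k := by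
  rw [range_eq_Ico, ← sum_Ico_consecutive _ (Nat.zero_le m) (by omega),
    sum_eq_zero fun k hk => by rw [hc k (mem_Ico.mp hk).2, zero_mul], zero_add,
    sum_Ico_eq_sum_range, show N + 1 - m = N - m + 1 by omega, mul_sum]
  exact sum_congr rfl fun k _ => by rw [pow_add]; ring

theorem tendsto_sum_range_mul_pow_nhds_zero (c : ℕ → ℝ) (N : ℕ) :
    Tendsto (fun x : ℝ => ∑ k ∈ range (N + 1), c k * x ^ k) (𝓝 0) (𝓝 (c 0)) := by
  have hcont : Continuous fun x : ℝ => ∑ k ∈ range (N + 1), c k * x ^ k := by fun_prop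
  simpa [sum_range_succ'] using hcont.tendsto 0

theorem tendsto_log_comp_div_log_nhdsGT_zero {g : ℝ → ℝ} {c : ℝ}
    (hg : Tendsto g (𝓝[>] 0) (𝓝 c)) (hc : c ≠ 0) :
    Tendsto (fun x => Real.log (g x) / Real.log x) (𝓝[>] 0) (𝓝 0) := by
  simpa [div_eq_mul_inv] using (hg.log hc).mul Real.tendsto_log_nhdsGT_zero.inv_tendsto_atBot

theorem tendsto_log_div_log_of_eventuallyEq_pow_mul {f g : ℝ → ℝ} {c : ℝ} (m : ℕ)
    (hg : Tendsto g (𝓝[>] 0) (𝓝 c)) (hc : c ≠ 0) (hfg : ∀ᶠ x in 𝓝[>] 0, f x = x ^ m * g x) :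
    Tendsto (fun x => Real.log (f x) / Real.log x) (𝓝[>] 0) (𝓝 m) := by
  have hlim := (tendsto_const_nhds (x := (m : ℝ))).add (tendsto_log_comp_div_log_nhdsGT_zero hg hc)
  rw [add_zero] at hlim
  refine hlim.congr' ?_
  filter_upwards [hfg, hg.eventually_ne hc, Ioo_mem_nhdsGT (zero_lt_one' ℝ)]
    with x hfx hgx ⟨hx0, hx1⟩
  have hlogx : Real.log x ≠ 0 := (Real.log_neg hx0 hx1).ne
  rw [hfx, Real.log_mul (pow_ne_zero m hx0.ne') hgx, Real.log_pow, add_div,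
    mul_div_cancel_right₀ _ hlogx]

theorem stmt_11_general {n : ℕ} (L : Matrix (Fin n) (Fin n) ℝ) (i j : Fin n)
    (N m : ℕ) (hmN : m ≤ N) (a b : ℕ → ℝ)
    (ham : 0 < a m) (halow : ∀ k, k < m → a k = 0)
    (hb0 : b 0 = 1)
    (hmft : ∀ α : ℝ, 0 < α →
      (1 + α • L)⁻¹ i j =
        (∑ k ∈ Finset.range (N + 1), a k * α ^ k) /
        (∑ k ∈ Finset.range (N + 1), b k * α ^ k)) :
    Tendsto (fun α : ℝ => Real.log ((1 + α • L)⁻¹ i j) / Real.log α)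
      (nhdsWithin 0 (Set.Ioi 0)) (nhds (m : ℝ)) := by
  set h := fun α : ℝ => ∑ k ∈ range (N - m + 1), a (m + k) * α ^ k
  set d := fun α : ℝ => ∑ k ∈ range (N + 1), b k * α ^ k
  have hh : Tendsto h (𝓝[>] 0) (𝓝 (a m)) :=
    (tendsto_sum_range_mul_pow_nhds_zero (fun k => a (m + k)) _).mono_left nhdsWithin_le_nhds
  have hd : Tendsto d (𝓝[>] 0) (𝓝 1) :=
    hb0 ▸ (tendsto_sum_range_mul_pow_nhds_zero b N).mono_left nhdsWithin_le_nhds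
  refine tendsto_log_div_log_of_eventuallyEq_pow_mul m (hh.div hd one_ne_zero)
    (by simpa using ham.ne') ?_
  filter_upwards [self_mem_nhdsWithin] with α hα
  rw [hmft α hα, sum_range_mul_pow_eq_pow_mul a hmN halow, mul_div_assoc]
  rfl

/-- Let `Q_α = (I + αL)⁻¹` for the Laplacian `L` of a connected weighted graph.
By the matrix forest theorem, `(Q_α)_ij = f_ij(α)/f(α)` with
`f_ij(α) = Σ_p f_ij^{(p)} α^p` (the coefficients `a`) and `f(α)` (the
coefficients `b`, with `b 0 = 1`), where `f_ij^{(p)} = 0` for `p < m` and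
`f_ij^{(m)} > 0`, `m` being the smallest number of edges of a spanning rooted
forest in which `i` is in the tree rooted at `j` (for unit weights, the
shortest-path distance).  Then `log_α (Q_α)_ij → m` as `α → 0⁺`. -/
theorem stmt_11 {n : ℕ} (L : Matrix (Fin n) (Fin n) ℝ) (i j : Fin n)
    (hij : i ≠ j) (N m : ℕ) (hmN : m ≤ N) (a b : ℕ → ℝ)
    (ha : ∀ k, 0 ≤ a k) (ham : 0 < a m) (halow : ∀ k, k < m → a k = 0)
    (hb : ∀ k, 0 ≤ b k) (hb0 : b 0 = 1)
    (hmft : ∀ α : ℝ, 0 < α →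
      (1 + α • L)⁻¹ i j =
        (∑ k ∈ Finset.range (N + 1), a k * α ^ k) /
        (∑ k ∈ Finset.range (N + 1), b k * α ^ k)) :
    Tendsto (fun α : ℝ => Real.log ((1 + α • L)⁻¹ i j) / Real.log α)
      (nhdsWithin 0 (Set.Ioi 0)) (nhds (m : ℝ)) :=
  stmt_11_general L i j N m hmN a b ham halow hb0 hmft
end

section
/- With the scaling γ = ln(e + α^{2/n}) and weight transformation w ↦ αw, the logarithmic forest distance d_α(i,j) = γ(α−1) log_α (√(f_ii(α) f_jj(α)) / f_ij(α)) converges, as α → ∞, to the resistance distance d^r(i,j) = (f_ii^{(n-2)} + f_jj^{(n-2)} − 2 f_ij^{(n-2)})/(n t). -/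
/-!
Write `S_kl(α) = ∑_p f_kl^{(p)} α^p = α^{n-1} R_kl(1/α)` with the reversed polynomial
`R_kl(x) = ∑_p f_kl^{(p)} x^{n-1-p}`, so that `R_kl(0) = t` and `R_kl'(0) = f_kl^{(n-2)}`.
Then `α log (S_kl(α) / (t α^{n-1})) = α log (R_kl(1/α) / t)` is a difference quotient of
`log (R_kl / t)` at `0`, hence tends to `f_kl^{(n-2)} / t`. The logarithm in `d_α` is
`½ log(S_ii/tα^{n-1}) + ½ log(S_jj/tα^{n-1}) - log(S_ij/tα^{n-1})`, so `(α - 1)` times it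
tends to `(f_ii^{(n-2)} + f_jj^{(n-2)} - 2 f_ij^{(n-2)}) / (2t)`, while `γ / ln α → 2/n`.
-/

open Filter Finset Topology

theorem tendsto_mul_comp_inv_atTop_of_hasDerivAt {h : ℝ → ℝ} {d : ℝ} (hd : HasDerivAt h d 0)
    (h0 : h 0 = 0) : Tendsto (fun α => α * h α⁻¹) atTop (𝓝 d) := by
  have hslope := (hasDerivAt_iff_tendsto_slope_zero.mp hd).comp
    (tendsto_inv_atTop_nhdsGT_zero.mono_right (nhdsWithin_mono _ fun x hx => ne_of_gt hx))
  simpa [Function.comp_def, h0] using hslope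

noncomputable def reversedSum (c : ℕ → ℝ) (m : ℕ) (x : ℝ) : ℝ :=
  ∑ p ∈ range (m + 1), c p * x ^ (m - p)

section reversedSum

variable (c : ℕ → ℝ) (m : ℕ)

theorem reversedSum_zero : reversedSum c m 0 = c m := by
  rw [reversedSum, sum_eq_single_of_mem m (self_mem_range_succ m)]
  · simp
  · intro p hp hpm
    have : m - p ≠ 0 := by have := mem_range.mp hp; omega
    simp [zero_pow this]

theorem hasDerivAt_reversedSum (hm : 1 ≤ m) :
    HasDerivAt (reversedSum c m) (c (m - 1)) 0 := by
  have hterm : ∀ p ∈ range (m + 1), HasDerivAt (fun x => c p * x ^ (m - p))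
      (c p * ((m - p : ℕ) * 0 ^ (m - p - 1))) 0 :=
    fun p _ => (hasDerivAt_pow _ _).const_mul _
  refine (HasDerivAt.fun_sum hterm).congr_deriv ?_
  rw [sum_eq_single_of_mem (m - 1) (mem_range.mpr (by omega))]
  · have : m - (m - 1) = 1 := by omega
    simp [this]
  · intro p hp hpm
    rcases Nat.lt_or_ge p (m - 1) with hlt | hge
    · have : m - p - 1 ≠ 0 := by omega
      simp [zero_pow this]
    · have : m - p = 0 := by have := mem_range.mp hp; omega
      simp [this]

theorem sum_div_pow_eq_reversedSum_inv {α : ℝ} (hα : α ≠ 0) :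
    (∑ p ∈ range (m + 1), c p * α ^ p) / α ^ m = reversedSum c m α⁻¹ := by
  rw [reversedSum, sum_div]
  refine sum_congr rfl fun p hp => ?_
  rw [inv_pow, pow_sub₀ _ hα (Nat.le_of_lt_succ (mem_range.mp hp))]
  field_simp

end reversedSum

section sum

variable {c : ℕ → ℝ} {m : ℕ}

theorem tendsto_mul_log_sum_div_atTop (hm : 1 ≤ m) (hc : c m ≠ 0) :
    Tendsto (fun α : ℝ => α * Real.log ((∑ p ∈ range (m + 1), c p * α ^ p) / (c m * α ^ m)))
      atTop (𝓝 (c (m - 1) / c m)) := by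
  have hd : HasDerivAt (fun x => Real.log (reversedSum c m x / c m)) (c (m - 1) / c m) 0 := by
    simpa [reversedSum_zero, hc] using
      ((hasDerivAt_reversedSum c m hm).div_const (c m)).log (by simp [reversedSum_zero, hc])
  refine (tendsto_mul_comp_inv_atTop_of_hasDerivAt hd (by simp [reversedSum_zero, hc])).congr' ?_
  filter_upwards [eventually_ne_atTop 0] with α hα
  rw [← sum_div_pow_eq_reversedSum_inv c m hα, div_div, mul_comm (α ^ m)]

theorem eventually_sum_pos_atTop (hc : 0 < c m) :
    ∀ᶠ α : ℝ in atTop, 0 < ∑ p ∈ range (m + 1), c p * α ^ p := by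
  have hlim : Tendsto (fun α : ℝ => reversedSum c m α⁻¹) atTop (𝓝 (c m)) := by
    have hcont : Continuous (reversedSum c m) := by unfold reversedSum; fun_prop
    simpa [reversedSum_zero, Function.comp_def] using
      (hcont.tendsto 0).comp (tendsto_inv_atTop_zero (𝕜 := ℝ))
  filter_upwards [hlim.eventually (lt_mem_nhds hc), eventually_gt_atTop 0] with α hrev hα
  rw [← sum_div_pow_eq_reversedSum_inv c m hα.ne'] at hrev
  exact (div_pos_iff_of_pos_right (pow_pos hα m)).mp hrev

end sum

theorem tendsto_log_exp_one_add_rpow_div_log_atTop {q : ℝ} (hq : 0 < q) :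
    Tendsto (fun α : ℝ => Real.log (Real.exp 1 + α ^ q) / Real.log α) atTop (𝓝 q) := by
  have hrem : Tendsto (fun α : ℝ => Real.log (1 + Real.exp 1 * α ^ (-q))) atTop (𝓝 0) := by
    simpa using (((tendsto_rpow_neg_atTop hq).const_mul (Real.exp 1)).const_add 1).log (by simp)
  have hlim := tendsto_const_nhds (x := q) |>.add (hrem.div_atTop Real.tendsto_log_atTop)
  rw [add_zero] at hlim
  refine hlim.congr' ?_
  filter_upwards [eventually_gt_atTop 1] with α hα
  have hα0 : 0 < α := by linarith
  have hsplit : Real.exp 1 + α ^ q = α ^ q * (1 + Real.exp 1 * α ^ (-q)) := by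
    rw [mul_add, mul_one, mul_left_comm, ← Real.rpow_add hα0, add_neg_cancel, Real.rpow_zero,
      mul_one, add_comm]
  rw [hsplit, Real.log_mul (by positivity) (by positivity), Real.log_rpow hα0,
    add_div, mul_div_cancel_right₀ _ (Real.log_pos hα).ne']

theorem Real.log_sqrt_mul_div_eq {a b c s : ℝ} (ha : 0 < a) (hb : 0 < b) (hc : 0 < c)
    (hs : 0 < s) :
    Real.log (√(a * b) / c) = Real.log (a / s) / 2 + Real.log (b / s) / 2 - Real.log (c / s) := by
  rw [Real.log_div (by positivity) hc.ne', Real.log_sqrt (by positivity),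
    Real.log_mul ha.ne' hb.ne', Real.log_div ha.ne' hs.ne', Real.log_div hb.ne' hs.ne',
    Real.log_div hc.ne' hs.ne']
  ring

theorem stmt_14_general (n : ℕ) (hn : 2 ≤ n) (t : ℝ) (ht : 0 < t)
    (f : Fin n → Fin n → ℕ → ℝ)
    (htop : ∀ i j, f i j (n - 1) = t) (i j : Fin n) :
    Tendsto (fun α : ℝ =>
        Real.log (Real.exp 1 + α ^ ((2 : ℝ) / n)) * (α - 1) *
          (Real.log (Real.sqrt ((∑ p ∈ Finset.range n, f i i p * α ^ p) *
              (∑ p ∈ Finset.range n, f j j p * α ^ p)) /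
            (∑ p ∈ Finset.range n, f i j p * α ^ p)) / Real.log α))
      atTop
      (nhds ((f i i (n - 2) + f j j (n - 2) - 2 * f i j (n - 2)) / (n * t))) := by
  obtain ⟨m, rfl⟩ : ∃ m, n = m + 1 := ⟨n - 1, by omega⟩
  simp only [add_tsub_cancel_right] at htop
  have hm : 1 ≤ m := by omega
  have hA (k l : Fin (m + 1)) :=
    htop k l ▸ tendsto_mul_log_sum_div_atTop hm ((htop k l).symm ▸ ht.ne')
  have hS (k l : Fin (m + 1)) := eventually_sum_pos_atTop (c := f k l) ((htop k l).symm ▸ ht)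
  have hγ :=
    tendsto_log_exp_one_add_rpow_div_log_atTop (q := 2 / ((m + 1 : ℕ) : ℝ)) (by positivity)
  have hlim := (hγ.mul (tendsto_inv_atTop_zero.const_sub 1)).mul
    ((((hA i i).div_const 2).add ((hA j j).div_const 2)).sub (hA i j))
  rw [show m + 1 - 2 = m - 1 by omega]
  convert hlim.congr' ?_ using 2
  · push_cast; field_simp; ring
  filter_upwards [hS i i, hS j j, hS i j, eventually_gt_atTop 0] with α hii hjj hij hα
  rw [Real.log_sqrt_mul_div_eq hii hjj hij (s := t * α ^ m) (by positivity)]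
  field_simp

/-- With the scaling `γ = ln(e + α^{2/n})` and weight transformation `w ↦ αw`,
the logarithmic forest distance
`d_α(i,j) = γ(α−1) log_α (√(f_ii(α) f_jj(α)) / f_ij(α))` converges, as
`α → ∞`, to the resistance distance
`d^r(i,j) = (f_ii^{(n-2)} + f_jj^{(n-2)} − 2 f_ij^{(n-2)})/(n t)`.
Here `f i j p` is the total weight `f_ij^{(p)}` of spanning rooted forests with
`p` edges in which `i` is in the tree rooted at `j`; `f_ij^{(n-1)} = t > 0` is
the total spanning tree weight. -/
theorem stmt_14 (n : ℕ) (hn : 2 ≤ n) (t : ℝ) (ht : 0 < t)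
    (f : Fin n → Fin n → ℕ → ℝ) (hnn : ∀ i j p, 0 ≤ f i j p)
    (htop : ∀ i j, f i j (n - 1) = t) (i j : Fin n) :
    Tendsto (fun α : ℝ =>
        Real.log (Real.exp 1 + α ^ ((2 : ℝ) / n)) * (α - 1) *
          (Real.log (Real.sqrt ((∑ p ∈ Finset.range n, f i i p * α ^ p) *
              (∑ p ∈ Finset.range n, f j j p * α ^ p)) /
            (∑ p ∈ Finset.range n, f i j p * α ^ p)) / Real.log α))
      atTop
      (nhds ((f i i (n - 2) + f j j (n - 2) - 2 * f i j (n - 2)) / (n * t))) :=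
  stmt_14_general n hn t ht f htop i j
end
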